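/- arXiv:0712.2193 — 2 statements merged into one kernel-verified Lean document; each statement's English description precedes it below -/
import Mathlib

section
/- (Joint continuity lemma from the proof of Theorem 11.2.) Let X be a compact metric space and let V ⊆ 𝔻 be a set with the property that any two bounded harmonic functions on 𝔻 that agree on V are equal. Let M > 0 and let g̃ : 𝔻 × X → ℝ satisfy: 0 < g̃(p,x) ≤ M for all (p,x); for each x ∈ X the function p ↦ g̃(p,x) is harmonic on 𝔻; and for each v ∈ V the function x ↦ g̃(v,x) is continuous on X. Then g̃ is jointly continuous on 𝔻 × X. -/
/-!
Near each point of the disc, a harmonic function with values in `[0, M]` is the real part of a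
holomorphic `G`, and Schwarz's lemma applied to `exp (-G)` bounds `G'` in terms of `M` only. So
the functions `g(·, x)` are equi-Lipschitz near each point, and joint continuity reduces to
continuity of each `g(p, ·)`. Along an ultrafilter converging to `x₀`, the `g(·, x)` converge
pointwise; the holomorphic `G` with `Re G = g(·, x)`, normalized to be real at a centre, are
uniformly bounded and equi-Lipschitz, hence converge locally uniformly (Arzelà–Ascoli), so the
limit is a bounded harmonic function. It agrees with
`g(·, x₀)` on `V`, hence on the whole disc.
-/

open Metric Set Filter

noncomputable section

/-- The open unit disc in `ℂ`. -/
def unitDisc : Set ℂ := Metric.ball 0 1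

/-- A function `f : ℂ → ℝ` is harmonic on a set `U ⊆ ℂ` if, locally on `U`, it is
the real part of a holomorphic function (for open `U` this is equivalent to being
`C²` with vanishing Laplacian). -/
def HarmonicOnSet (f : ℂ → ℝ) (U : Set ℂ) : Prop :=
  ∀ z ∈ U, ∃ r > 0, Metric.ball z r ⊆ U ∧
    ∃ g : ℂ → ℂ, DifferentiableOn ℂ g (Metric.ball z r) ∧
      ∀ w ∈ Metric.ball z r, f w = (g w).re

/-- `H` is a bounded harmonic function on the open unit disc. -/
def IsBoundedHarmonic (H : ℂ → ℝ) : Prop :=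
  HarmonicOnSet H unitDisc ∧ ∃ M : ℝ, ∀ z ∈ unitDisc, |H z| ≤ M

open Topology InnerProductSpace
open scoped NNReal

theorem HarmonicOnSet.harmonicOnNhd {f : ℂ → ℝ} {U : Set ℂ} (hf : HarmonicOnSet f U) :
    HarmonicOnNhd f U := by
  intro z hz
  obtain ⟨r, hr, -, G, hG, hfG⟩ := hf z hz
  refine (harmonicAt_congr_nhds ?_).2 (hG.analyticAt (ball_mem_nhds z hr)).harmonicAt_re
  filter_upwards [ball_mem_nhds z hr] with w hw using hfG w hw

theorem Complex.norm_deriv_le_of_re_mem_Icc {G : ℂ → ℂ} {c : ℂ} {R M : ℝ} (hR : 0 < R)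
    (hG : DifferentiableOn ℂ G (ball c R)) (hre : ∀ w ∈ ball c R, (G w).re ∈ Icc 0 M) :
    ‖deriv G c‖ ≤ 2 * Real.exp M / R := by
  set F : ℂ → ℂ := fun w => exp (-G w)
  have hF_le : ∀ w ∈ ball c R, ‖F w‖ ≤ 1 := fun w hw => by
    simpa [F, norm_exp] using (hre w hw).1
  have hmaps : MapsTo F (ball c R) (closedBall (F c) 2) := fun w hw => by
    rw [mem_closedBall, dist_eq_norm]
    calc ‖F w - F c‖ ≤ ‖F w‖ + ‖F c‖ := norm_sub_le _ _
      _ ≤ 1 + 1 := add_le_add (hF_le w hw) (hF_le c (mem_ball_self hR))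
      _ = 2 := by norm_num
  have hF' : HasDerivAt F (F c * -deriv G c) c :=
    (hG.differentiableAt (ball_mem_nhds c hR)).hasDerivAt.neg.cexp
  calc ‖deriv G c‖ = Real.exp (G c).re * ‖deriv F c‖ := by
        rw [hF'.deriv, norm_mul, norm_neg, norm_exp, neg_re, ← mul_assoc, ← Real.exp_add,
          add_neg_cancel, Real.exp_zero, one_mul]
    _ ≤ Real.exp M * (2 / R) := by
        gcongr
        · exact (hre c (mem_ball_self hR)).2
        · exact norm_deriv_le_div_of_mapsTo_ball hG.neg.cexp hmaps hR
    _ = 2 * Real.exp M / R := by ring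

theorem Complex.lipschitzOnWith_of_re_mem_Icc {G : ℂ → ℂ} {c : ℂ} {R M : ℝ} (hR : 0 < R)
    (hG : DifferentiableOn ℂ G (ball c R)) (hre : ∀ w ∈ ball c R, (G w).re ∈ Icc 0 M) :
    LipschitzOnWith (4 * Real.exp M / R).toNNReal G (ball c (R / 2)) := by
  have hsub : ∀ w ∈ ball c (R / 2), ball w (R / 2) ⊆ ball c R := fun w hw =>
    ball_subset_ball' (by rw [mem_ball] at hw; linarith)
  refine (convex_ball c (R / 2)).lipschitzOnWith_of_nnnorm_deriv_le
    (fun w hw => hG.differentiableAt (mem_of_superset (ball_mem_nhds w (half_pos hR)) (hsub w hw)))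
    fun w hw => ?_
  rw [← NNReal.coe_le_coe, coe_nnnorm, Real.coe_toNNReal _ (by positivity)]
  calc ‖deriv G w‖ ≤ 2 * Real.exp M / (R / 2) :=
        norm_deriv_le_of_re_mem_Icc (half_pos hR) (hG.mono (hsub w hw))
          fun u hu => hre u (hsub w hw hu)
    _ = 4 * Real.exp M / R := by field_simp; ring

theorem InnerProductSpace.HarmonicOnNhd.exists_re_eq_bounded_lipschitzOnWith {h : ℂ → ℝ}
    {c : ℂ} {R M : ℝ} (hR : 0 < R) (hh : HarmonicOnNhd h (ball c R))
    (hb : ∀ w ∈ ball c R, h w ∈ Icc 0 M) :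
    ∃ G : ℂ → ℂ, DifferentiableOn ℂ G (ball c R) ∧ EqOn (fun w => (G w).re) h (ball c R) ∧
      (∀ w ∈ ball c (R / 2), ‖G w‖ ≤ M + 2 * Real.exp M) ∧
      LipschitzOnWith (4 * Real.exp M / R).toNNReal G (ball c (R / 2)) := by
  obtain ⟨G₀, hG₀, hG₀re⟩ := hh.exists_analyticOnNhd_ball_re_eq
  -- normalize so that `G c` is real, hence of norm `h c ≤ M`
  set G : ℂ → ℂ := fun w => G₀ w - (G₀ c).im * Complex.I
  have hG : DifferentiableOn ℂ G (ball c R) := hG₀.differentiableOn.sub_const _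
  have hGre : EqOn (fun w => (G w).re) h (ball c R) := fun w hw => by
    simpa [G] using hG₀re hw
  have hc : c ∈ ball c R := mem_ball_self hR
  have hlip := Complex.lipschitzOnWith_of_re_mem_Icc hR hG fun w hw => hGre hw ▸ hb w hw
  refine ⟨G, hG, hGre, fun w hw => ?_, hlip⟩
  have hGc : ‖G c‖ ≤ M := by
    have hre : (G c).re = h c := hGre hc
    have him : (G c).im = 0 := by simp [G]
    rw [← Complex.re_add_im (G c), hre, him, Complex.ofReal_zero, zero_mul, add_zero,
      Complex.norm_real, Real.norm_of_nonneg (hb c hc).1]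
    exact (hb c hc).2
  have hdist : dist (G w) (G c) ≤ 4 * Real.exp M / R * (R / 2) := by
    have := hlip.dist_le_mul w hw c (mem_ball_self (half_pos hR))
    rw [Real.coe_toNNReal _ (by positivity)] at this
    exact this.trans (by gcongr; exact (mem_ball.1 hw).le)
  calc ‖G w‖ ≤ ‖G c‖ + dist (G w) (G c) := by
        rw [dist_eq_norm]; exact norm_le_norm_add_norm_sub' _ _
    _ ≤ M + 4 * Real.exp M / R * (R / 2) := add_le_add hGc hdist
    _ = M + 2 * Real.exp M := by field_simp; ring

theorem EquicontinuousOn.tendstoLocallyUniformlyOn {ι X α : Type*} [TopologicalSpace X]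
    [LocallyCompactSpace X] [UniformSpace α] {F : ι → X → α} {f : X → α} {U : Set X}
    {l : Filter ι} (hU : IsOpen U) (hF : EquicontinuousOn F U)
    (hlim : ∀ x ∈ U, Tendsto (F · x) l (𝓝 (f x))) : TendstoLocallyUniformlyOn F f l U := by
  refine (tendstoLocallyUniformlyOn_iff_forall_isCompact hU).2 fun K hKU hK => ?_
  have := (EquicontinuousOn.tendsto_uniformOnFun_iff_pi' (𝔖 := {K}) (by simpa)
    (by simpa using hF.mono hKU) l f).2 ?_
  · simpa [UniformOnFun.tendsto_iff_tendstoUniformlyOn, Function.comp_def] using this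
  · rw [tendsto_pi_nhds]
    rintro ⟨x, hx⟩
    simp only [sUnion_singleton] at hx
    exact hlim x (hKU hx)

theorem differentiableOn_of_tendsto_of_lipschitzOnWith {ι : Type*} {l : Filter ι} [l.NeBot]
    {G : ι → ℂ → ℂ} {φ : ℂ → ℂ} {U : Set ℂ} {K : ℝ≥0} (hU : IsOpen U)
    (hG : ∀ i, DifferentiableOn ℂ (G i) U) (hK : ∀ i, LipschitzOnWith K (G i) U)
    (hlim : ∀ w ∈ U, Tendsto (G · w) l (𝓝 (φ w))) : DifferentiableOn ℂ φ U :=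
  ((LipschitzOnWith.uniformEquicontinuousOn G K hK).equicontinuousOn.tendstoLocallyUniformlyOn
    hU hlim).differentiableOn (Eventually.of_forall hG) hU

theorem IsCompact.exists_tendsto_ultrafilter {ι X : Type*} [TopologicalSpace X] {s : Set X}
    (hs : IsCompact s) (𝒰 : Ultrafilter ι) {f : ι → X} (hf : ∀ i, f i ∈ s) :
    ∃ a ∈ s, Tendsto f 𝒰 (𝓝 a) :=
  hs.ultrafilter_le_nhds' (𝒰.map f) (Ultrafilter.mem_map.2 (univ_mem' hf))

theorem harmonicOnSet_of_tendsto {ι : Type*} (𝒰 : Ultrafilter ι) {h : ι → ℂ → ℝ} {F : ℂ → ℝ}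
    {U : Set ℂ} {M : ℝ} (hU : IsOpen U) (hh : ∀ i, HarmonicOnNhd (h i) U)
    (hb : ∀ i, ∀ w ∈ U, h i w ∈ Icc 0 M) (hlim : ∀ w ∈ U, Tendsto (h · w) 𝒰 (𝓝 (F w))) :
    HarmonicOnSet F U := by
  intro z hz
  obtain ⟨R, hR, hRU⟩ := isOpen_iff.1 hU z hz
  have hsub : ball z (R / 2) ⊆ ball z R := ball_subset_ball (by linarith)
  choose G hG hGre hGb hGlip using fun i =>
    ((hh i).mono hRU).exists_re_eq_bounded_lipschitzOnWith hR fun w hw => hb i w (hRU hw)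
  have hconv : ∀ w ∈ ball z (R / 2), ∃ a, Tendsto (G · w) 𝒰 (𝓝 a) := fun w hw => by
    obtain ⟨a, -, ha⟩ := (isCompact_closedBall 0 _).exists_tendsto_ultrafilter 𝒰
      fun i => mem_closedBall_zero_iff.2 (hGb i w hw)
    exact ⟨a, ha⟩
  choose! φ hφ using hconv
  refine ⟨R / 2, half_pos hR, hsub.trans hRU, φ, differentiableOn_of_tendsto_of_lipschitzOnWith
    isOpen_ball (fun i => (hG i).mono hsub) hGlip hφ, fun w hw => ?_⟩
  refine tendsto_nhds_unique (hlim w (hRU (hsub hw))) ?_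
  exact ((Complex.continuous_re.tendsto _).comp (hφ w hw)).congr fun i => hGre i (hsub hw)

theorem equicontinuousAt_of_harmonicOnNhd_of_mem_Icc {ι : Type*} {h : ι → ℂ → ℝ} {U : Set ℂ}
    {M : ℝ} {z : ℂ} (hU : IsOpen U) (hz : z ∈ U) (hh : ∀ i, HarmonicOnNhd (h i) U)
    (hb : ∀ i, ∀ w ∈ U, h i w ∈ Icc 0 M) : EquicontinuousAt h z := by
  obtain ⟨R, hR, hRU⟩ := isOpen_iff.1 hU z hz
  have hlip : ∀ i, LipschitzOnWith (4 * Real.exp M / R).toNNReal (h i) (ball z (R / 2)) := by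
    intro i
    obtain ⟨G, -, hGre, -, hGlip⟩ :=
      ((hh i).mono hRU).exists_re_eq_bounded_lipschitzOnWith hR fun w hw => hb i w (hRU hw)
    have hsub : ball z (R / 2) ⊆ ball z R := ball_subset_ball (by linarith)
    refine LipschitzOnWith.of_dist_le_mul fun p hp q hq => ?_
    rw [← hGre (hsub hp), ← hGre (hsub hq), Real.dist_eq, ← Complex.sub_re]
    exact (Complex.abs_re_le_norm _).trans
      ((dist_eq_norm (G p) (G q)).symm.trans_le (hGlip.dist_le_mul p hp q hq))
  have := (LipschitzOnWith.uniformEquicontinuousOn h _ hlip).equicontinuousOn z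
    (mem_ball_self (half_pos hR))
  intro V hV
  simpa [nhdsWithin_eq_nhds.2 (ball_mem_nhds z (half_pos hR))] using this V hV

theorem EquicontinuousAt.continuousAt_uncurry_flip {ι X α : Type*} [TopologicalSpace ι]
    [TopologicalSpace X] [UniformSpace α] {F : ι → X → α} {x₀ : X} {i₀ : ι}
    (hF : EquicontinuousAt F x₀) (hc : ContinuousAt (F · x₀) i₀) :
    ContinuousAt (Function.uncurry (flip F)) (x₀, i₀) := by
  refine Uniform.tendsto_nhds_right.2 fun U hU => ?_
  obtain ⟨V, hV, hVU⟩ := comp_mem_uniformity_sets hU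
  have hc' : ∀ᶠ i in 𝓝 i₀, (F i₀ x₀, F i x₀) ∈ V := Uniform.tendsto_nhds_right.1 hc hV
  rw [nhds_prod_eq]
  exact mem_map.2 (((hF V hV).prod_mk hc').mono fun q hq =>
    hVU (SetRel.prodMk_mem_comp hq.2 (hq.1 q.2)))

theorem isBoundedHarmonic_of_mem_Icc {H : ℂ → ℝ} {M : ℝ} (hH : HarmonicOnSet H unitDisc)
    (hb : ∀ p ∈ unitDisc, H p ∈ Icc 0 M) : IsBoundedHarmonic H :=
  ⟨hH, M, fun p hp => abs_le.2 ⟨by linarith [(hb p hp).1, (hb p hp).2], (hb p hp).2⟩⟩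

theorem exists_isBoundedHarmonic_tendsto {ι : Type*} (𝒰 : Ultrafilter ι) {h : ι → ℂ → ℝ}
    {M : ℝ} (hh : ∀ i, HarmonicOnSet (h i) unitDisc)
    (hb : ∀ i, ∀ p ∈ unitDisc, h i p ∈ Icc 0 M) :
    ∃ F, IsBoundedHarmonic F ∧ ∀ p ∈ unitDisc, Tendsto (h · p) 𝒰 (𝓝 (F p)) := by
  choose! F hFb hF using fun p (hp : p ∈ unitDisc) =>
    isCompact_Icc.exists_tendsto_ultrafilter 𝒰 fun i => hb i p hp
  exact ⟨F, isBoundedHarmonic_of_mem_Icc (harmonicOnSet_of_tendsto 𝒰 isOpen_ball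
    (fun i => (hh i).harmonicOnNhd) hb hF) hFb, hF⟩

theorem continuous_of_continuous_on_uniquenessSet {X : Type*} [TopologicalSpace X]
    {V : Set ℂ} (hV : V ⊆ unitDisc)
    (huniq : ∀ H₁ H₂ : ℂ → ℝ, IsBoundedHarmonic H₁ → IsBoundedHarmonic H₂ →
      (∀ v ∈ V, H₁ v = H₂ v) → ∀ z ∈ unitDisc, H₁ z = H₂ z)
    {M : ℝ} {g : ℂ → X → ℝ} (hb : ∀ x, ∀ p ∈ unitDisc, g p x ∈ Icc 0 M)
    (hharm : ∀ x, HarmonicOnSet (fun p => g p x) unitDisc) (hcont : ∀ v ∈ V, Continuous (g v))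
    {p : ℂ} (hp : p ∈ unitDisc) : Continuous (g p) := by
  refine continuous_iff_continuousAt.2 fun x₀ =>
    (tendsto_iff_ultrafilter _ _ _).2 fun 𝒰 h𝒰 => ?_
  obtain ⟨F, hF, hlim⟩ := exists_isBoundedHarmonic_tendsto 𝒰 hharm hb
  have hFV : ∀ v ∈ V, F v = g v x₀ := fun v hv =>
    tendsto_nhds_unique (hlim v (hV hv)) (((hcont v hv).tendsto x₀).mono_left h𝒰)
  have hFp := huniq F _ hF (isBoundedHarmonic_of_mem_Icc (hharm x₀) (hb x₀)) hFV p hp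
  exact hFp ▸ hlim p hp

theorem joint_continuity_of_separately_regular_general
    {X : Type*} [MetricSpace X]
    (V : Set ℂ) (hV : V ⊆ unitDisc)
    (huniq : ∀ H₁ H₂ : ℂ → ℝ, IsBoundedHarmonic H₁ → IsBoundedHarmonic H₂ →
      (∀ v ∈ V, H₁ v = H₂ v) → ∀ z ∈ unitDisc, H₁ z = H₂ z)
    (M : ℝ) (g : ℂ → X → ℝ)
    (hg_pos : ∀ p ∈ unitDisc, ∀ x : X, 0 < g p x ∧ g p x ≤ M)
    (hg_harm : ∀ x : X, HarmonicOnSet (fun p => g p x) unitDisc)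
    (hg_cont : ∀ v ∈ V, Continuous (fun x : X => g v x)) :
    ContinuousOn (fun p : ℂ × X => g p.1 p.2) (unitDisc ×ˢ (univ : Set X)) := by
  have hb : ∀ x, ∀ p ∈ unitDisc, g p x ∈ Icc 0 M := fun x p hp =>
    ⟨(hg_pos p hp x).1.le, (hg_pos p hp x).2⟩
  rintro ⟨p, x⟩ ⟨hp, -⟩
  have hequi : EquicontinuousAt (fun x p => g p x) p :=
    equicontinuousAt_of_harmonicOnNhd_of_mem_Icc isOpen_ball hp
      (fun x => (hg_harm x).harmonicOnNhd) hb
  have hcont : Continuous (g p) :=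
    continuous_of_continuous_on_uniquenessSet hV huniq hb hg_harm hg_cont hp
  exact (hequi.continuousAt_uncurry_flip hcont.continuousAt).continuousWithinAt

/-- **Joint continuity lemma (from the proof of Theorem 11.2).** Let `X` be a compact
metric space and `V ⊆ 𝔻` a uniqueness set for bounded harmonic functions. If
`g : 𝔻 × X → ℝ` is positive and bounded, harmonic in the disc variable for each `x`, and
continuous in `x` at each point of `V`, then `g` is jointly continuous on `𝔻 × X`. -/
theorem joint_continuity_of_separately_regular
    {X : Type*} [MetricSpace X] [CompactSpace X]
    (V : Set ℂ) (hV : V ⊆ unitDisc)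
    (huniq : ∀ H₁ H₂ : ℂ → ℝ, IsBoundedHarmonic H₁ → IsBoundedHarmonic H₂ →
      (∀ v ∈ V, H₁ v = H₂ v) → ∀ z ∈ unitDisc, H₁ z = H₂ z)
    (M : ℝ) (hM : 0 < M) (g : ℂ → X → ℝ)
    (hg_pos : ∀ p ∈ unitDisc, ∀ x : X, 0 < g p x ∧ g p x ≤ M)
    (hg_harm : ∀ x : X, HarmonicOnSet (fun p => g p x) unitDisc)
    (hg_cont : ∀ v ∈ V, Continuous (fun x : X => g v x)) :
    ContinuousOn (fun p : ℂ × X => g p.1 p.2) (unitDisc ×ˢ (univ : Set X)) :=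
  joint_continuity_of_separately_regular_general V hV huniq M g hg_pos hg_harm hg_cont
end
end

section
/- (Key step of Proposition 7.2 for bundles over compact hyperbolic surfaces: equal values propagate.) Let Γ be a cocompact Fuchsian group acting on [0,1] by homeomorphisms fixing 0 and 1, and assume that no point x ∈ (0,1) has a finite Γ-orbit. Let f̃ : 𝔻 × [0,1] → ℝ be a Γ-invariant leafwise harmonic function with f̃(z,0) = 0 and f̃(z,1) = 1 for all z ∈ 𝔻. If f̃(z₀,x₀) = f̃(z₀,x₁) for some z₀ ∈ 𝔻 and some 0 ≤ x₀ < x₁ ≤ 1, then f̃(z,x) = f̃(z,x₀) for every z ∈ 𝔻 and every x ∈ [x₀,x₁]. -/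
open Metric Set Filter

noncomputable section

/-- `ρ` is a cocompact Fuchsian group action of `Γ` on the open unit disc: a faithful,
properly discontinuous, cocompact action by Möbius transformations
`z ↦ (αz+β)/(β̄z+ᾱ)` with `|α|² - |β|² = 1`. -/
structure IsCocompactFuchsian (Γ : Type*) [Group Γ] (ρ : Γ → ℂ → ℂ) : Prop where
  one_act : ∀ z ∈ unitDisc, ρ 1 z = z
  mul_act : ∀ γ₁ γ₂ : Γ, ∀ z ∈ unitDisc, ρ (γ₁ * γ₂) z = ρ γ₁ (ρ γ₂ z)
  maps_disc : ∀ γ : Γ, ∀ z ∈ unitDisc, ρ γ z ∈ unitDisc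
  moebius : ∀ γ : Γ, ∃ α β : ℂ, ‖α‖ ^ 2 - ‖β‖ ^ 2 = 1 ∧
    ∀ z ∈ unitDisc, ρ γ z = (α * z + β) / ((starRingEnd ℂ) β * z + (starRingEnd ℂ) α)
  faithful : ∀ γ : Γ, (∀ z ∈ unitDisc, ρ γ z = z) → γ = 1
  properly_discontinuous : ∀ K : Set ℂ, K ⊆ unitDisc → IsCompact K →
    {γ : Γ | ((ρ γ '' K) ∩ K).Nonempty}.Finite
  cocompact : ∃ K : Set ℂ, K ⊆ unitDisc ∧ IsCompact K ∧ ∀ z ∈ unitDisc, ∃ γ : Γ, ρ γ z ∈ K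

/-- `σ` is an action of the group `Γ` on the topological space `X` by homeomorphisms. -/
structure IsActionByHomeomorphisms (Γ : Type*) [Group Γ] (X : Type*) [TopologicalSpace X]
    (σ : Γ → X → X) : Prop where
  one_act : ∀ x : X, σ 1 x = x
  mul_act : ∀ γ₁ γ₂ : Γ, ∀ x : X, σ (γ₁ * γ₂) x = σ γ₁ (σ γ₂ x)
  continuous_act : ∀ γ : Γ, Continuous (σ γ)

/-!
Minimising the increment `f z x' - f z x` (`x ≤ x'`) over a compact fundamental set and all
ordered pairs gives, by invariance, a global lower bound `m` attained at some `(w, a, b)`. The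
minimum principle makes `f (·, b) - f (·, a) ≡ m`, so `f w (γ b) - f w (γ a) = m` for every `γ`.
Since `Γ` has no finite orbit in `(0, 1)`, orbit closures of interior points contain `0` and `1`,
so unless `[a, b] = [0, 1]` the pairs `(γ a, γ b)` accumulate at `(0, 0)` or `(1, 1)` and `m = 0`;
in every case `m ≥ 0`, i.e. `f` is monotone in `x`. Then `f (·, x₁) - f (·, x₀) ≥ 0` vanishes at
`z₀`, hence everywhere, and monotonicity squeezes the values in between.
-/

open Topology

section Harmonic

variable {f g : ℂ → ℝ} {U : Set ℂ}

theorem HarmonicOnSet.isOpen (hf : HarmonicOnSet f U) : IsOpen U :=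
  Metric.isOpen_iff.2 fun z hz =>
    let ⟨r, hr, hrU, _⟩ := hf z hz
    ⟨r, hr, hrU⟩

theorem HarmonicOnSet.continuousOn (hf : HarmonicOnSet f U) : ContinuousOn f U := by
  intro z hz
  obtain ⟨r, hr, -, g, hg, hfg⟩ := hf z hz
  have hre : ContinuousAt (fun w => (g w).re) z :=
    Complex.continuous_re.continuousAt.comp (hg.continuousOn.continuousAt (ball_mem_nhds z hr))
  exact (hre.congr (eventually_of_mem (ball_mem_nhds z hr) fun w hw => (hfg w hw).symm))
    |>.continuousWithinAt

theorem HarmonicOnSet.sub (hf : HarmonicOnSet f U) (hg : HarmonicOnSet g U) :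
    HarmonicOnSet (fun z => f z - g z) U := by
  intro z hz
  obtain ⟨r₁, hr₁, hr₁U, F, hF, hfF⟩ := hf z hz
  obtain ⟨r₂, hr₂, -, G, hG, hgG⟩ := hg z hz
  have h₁ : ball z (min r₁ r₂) ⊆ ball z r₁ := ball_subset_ball (min_le_left _ _)
  have h₂ : ball z (min r₁ r₂) ⊆ ball z r₂ := ball_subset_ball (min_le_right _ _)
  refine ⟨min r₁ r₂, lt_min hr₁ hr₂, h₁.trans hr₁U, F - G, (hF.mono h₁).sub (hG.mono h₂),
    fun w hw => ?_⟩
  simp [hfF w (h₁ hw), hgG w (h₂ hw)]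

theorem HarmonicOnSet.eventually_eq_of_isMinOn (hf : HarmonicOnSet f U) {w : ℂ} (hw : w ∈ U)
    (hmin : IsMinOn f U w) : ∀ᶠ z in 𝓝 w, f z = f w := by
  obtain ⟨r, hr, -, g, hg, hfg⟩ := hf w hw
  -- `‖exp (-g)‖ = exp (-f)`, so a minimum of `f` is a maximum of the modulus of `exp (-g)`.
  have hnorm : ∀ z ∈ ball w r, ‖Complex.exp (-g z)‖ = Real.exp (-f z) := fun z hz => by
    rw [Complex.norm_exp, Complex.neg_re, hfg z hz]
  have hmax : IsLocalMax (norm ∘ fun z => Complex.exp (-g z)) w := by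
    filter_upwards [ball_mem_nhds w hr, hf.isOpen.mem_nhds hw] with z hz hzU
    have hwz : f w ≤ f z := hmin hzU
    simpa only [Function.comp_apply, hnorm z hz, hnorm w (mem_ball_self hr), Real.exp_le_exp,
      neg_le_neg_iff] using hwz
  have hdiff : ∀ᶠ z in 𝓝 w, DifferentiableAt ℂ (fun z => Complex.exp (-g z)) z :=
    hg.neg.cexp.eventually_differentiableAt (ball_mem_nhds w hr)
  filter_upwards [Complex.norm_eventually_eq_of_isLocalMax hdiff hmax, ball_mem_nhds w hr]
    with z hz hzr
  rw [hnorm z hzr, hnorm w (mem_ball_self hr)] at hz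
  simpa using hz

theorem HarmonicOnSet.eqOn_of_isMinOn (hf : HarmonicOnSet f U) (hU : IsPreconnected U)
    {w : ℂ} (hw : w ∈ U) (hmin : IsMinOn f U w) : EqOn f (fun _ => f w) U := by
  have hopen : IsOpen {z | z ∈ U ∧ f z = f w} := by
    refine isOpen_iff_mem_nhds.2 fun z ⟨hzU, hz⟩ => ?_
    have hminz : IsMinOn f U z := fun y hy => show f z ≤ f y from hz ▸ hmin hy
    filter_upwards [hf.isOpen.mem_nhds hzU, hf.eventually_eq_of_isMinOn hzU hminz] with y hy hyz
    exact ⟨hy, hyz.trans hz⟩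
  have hsub := hU.subset_left_of_subset_union hopen
    (hf.continuousOn.isOpen_inter_preimage hf.isOpen isOpen_compl_singleton)
    (disjoint_left.2 fun z hz hz' => hz'.2 hz.2)
    (fun z hz => (em (f z = f w)).imp (⟨hz, ·⟩) (⟨hz, ·⟩)) ⟨w, hw, hw, rfl⟩
  exact fun z hz => (hsub hz).2

end Harmonic

theorem IsCocompactFuchsian.apply_inv_apply {Γ : Type*} [Group Γ] {ρ : Γ → ℂ → ℂ}
    (hΓ : IsCocompactFuchsian Γ ρ) (γ : Γ) {z : ℂ} (hz : z ∈ unitDisc) : ρ γ (ρ γ⁻¹ z) = z := by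
  rw [← hΓ.mul_act γ γ⁻¹ z hz, mul_inv_cancel, hΓ.one_act z hz]

namespace IsActionByHomeomorphisms

variable {Γ X : Type*} [Group Γ] [TopologicalSpace X] {σ : Γ → X → X}

theorem apply_inv_apply (hσ : IsActionByHomeomorphisms Γ X σ) (γ : Γ) (x : X) :
    σ γ (σ γ⁻¹ x) = x := by
  rw [← hσ.mul_act, mul_inv_cancel, hσ.one_act]

theorem injective (hσ : IsActionByHomeomorphisms Γ X σ) (γ : Γ) : Function.Injective (σ γ) :=
  Function.LeftInverse.injective (g := σ γ⁻¹) fun x => by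
    simpa only [inv_inv] using hσ.apply_inv_apply γ⁻¹ x

theorem mapsTo_closure_orbit (hσ : IsActionByHomeomorphisms Γ X σ) (γ : Γ) (x : X) :
    MapsTo (σ γ) (closure (range (σ · x))) (closure (range (σ · x))) := by
  refine MapsTo.closure ?_ (hσ.continuous_act γ)
  rintro _ ⟨δ, rfl⟩
  exact ⟨γ * δ, hσ.mul_act γ δ x⟩

variable [PartialOrder X]

theorem apply_eq_of_isGreatest_closure_orbit (hσ : IsActionByHomeomorphisms Γ X σ)
    (hmono : ∀ γ, Monotone (σ γ)) {x s : X} (hs : IsGreatest (closure (range (σ · x))) s)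
    (γ : Γ) : σ γ s = s :=
  le_antisymm (hs.2 (hσ.mapsTo_closure_orbit γ x hs.1)) <| by
    simpa only [hσ.apply_inv_apply] using hmono γ (hs.2 (hσ.mapsTo_closure_orbit γ⁻¹ x hs.1))

theorem apply_eq_of_isLeast_closure_orbit (hσ : IsActionByHomeomorphisms Γ X σ)
    (hmono : ∀ γ, Monotone (σ γ)) {x s : X} (hs : IsLeast (closure (range (σ · x))) s)
    (γ : Γ) : σ γ s = s :=
  le_antisymm (by
    simpa only [hσ.apply_inv_apply] using hmono γ (hs.2 (hσ.mapsTo_closure_orbit γ⁻¹ x hs.1)))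
    (hs.2 (hσ.mapsTo_closure_orbit γ x hs.1))

section Orbits

variable {σ : Γ → unitInterval → unitInterval} (hσ : IsActionByHomeomorphisms Γ unitInterval σ)
  (hmono : ∀ γ, Monotone (σ γ))
  (hnofinite : ∀ x : unitInterval, 0 < (x : ℝ) → (x : ℝ) < 1 →
    (range fun γ : Γ => σ γ x).Infinite)
include hσ hmono hnofinite

-- The extreme points of an orbit closure are fixed points, which `hnofinite` confines to `{0, 1}`.
theorem one_mem_closure_orbit {y : unitInterval} (hy : y ≠ 0) :
    (1 : unitInterval) ∈ closure (range (σ · y)) := by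
  obtain ⟨s, hs⟩ := isClosed_closure.isCompact.exists_isGreatest (range_nonempty (σ · y)).closure
  have hys : y ≤ s := hs.2 (subset_closure ⟨1, hσ.one_act y⟩)
  have hs1 : s = 1 := by
    by_contra hs1
    refine hnofinite s ((unitInterval.pos_iff_ne_zero.2 hy).trans_le hys)
      (unitInterval.lt_one_iff_ne_one.2 hs1) ((finite_singleton s).subset ?_)
    exact range_subset_iff.2 (hσ.apply_eq_of_isGreatest_closure_orbit hmono hs)
  exact hs1 ▸ hs.1

theorem zero_mem_closure_orbit {y : unitInterval} (hy : y ≠ 1) :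
    (0 : unitInterval) ∈ closure (range (σ · y)) := by
  obtain ⟨s, hs⟩ := isClosed_closure.isCompact.exists_isLeast (range_nonempty (σ · y)).closure
  have hsy : s ≤ y := hs.2 (subset_closure ⟨1, hσ.one_act y⟩)
  have hs0 : s = 0 := by
    by_contra hs0
    refine hnofinite s (unitInterval.pos_iff_ne_zero.2 hs0)
      (hsy.trans_lt (unitInterval.lt_one_iff_ne_one.2 hy)) ((finite_singleton s).subset ?_)
    exact range_subset_iff.2 (hσ.apply_eq_of_isLeast_closure_orbit hmono hs)
  exact hs0 ▸ hs.1

end Orbits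

end IsActionByHomeomorphisms

namespace unitInterval

theorem monotone_of_continuous_injective {g : I → I} (hc : Continuous g)
    (hi : Function.Injective g) (h0 : g 0 = 0) : Monotone g :=
  (hc.strictMono_of_inj_boundedOrder (by simp [show (⊥ : I) = 0 from rfl, h0]) hi).monotone

theorem exists_tendsto_of_le_of_mem_closure {ι : Type*} {u v : ι → I} (huv : ∀ i, u i ≤ v i)
    (h : (1 : I) ∈ closure (range u) ∨ (0 : I) ∈ closure (range v)) :
    ∃ (l : Filter ι) (c : I), l.NeBot ∧ Tendsto u l (𝓝 c) ∧ Tendsto v l (𝓝 c) := by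
  have hneBot : ∀ {w : ι → I} {c : I}, c ∈ closure (range w) → (comap w (𝓝 c)).NeBot :=
    fun hc => comap_neBot_iff.2 fun t ht =>
      let ⟨_, hts, i, hi⟩ := mem_closure_iff_nhds.1 hc t ht
      ⟨i, hi ▸ hts⟩
  rcases h with h | h
  · exact ⟨_, 1, hneBot h, tendsto_comap,
      tendsto_of_tendsto_of_tendsto_of_le_of_le tendsto_comap tendsto_const_nhds huv
        fun _ => le_one'⟩
  · exact ⟨_, 0, hneBot h,
      tendsto_of_tendsto_of_tendsto_of_le_of_le tendsto_const_nhds tendsto_comap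
        (fun _ => nonneg') huv, tendsto_comap⟩

theorem eq_zero_of_forall_sub_eq {ι : Type*} {u v : ι → I} (huv : ∀ i, u i ≤ v i)
    (h : (1 : I) ∈ closure (range u) ∨ (0 : I) ∈ closure (range v)) {φ : I → ℝ}
    (hφ : Continuous φ) {m : ℝ} (hm : ∀ i, φ (v i) - φ (u i) = m) : m = 0 := by
  obtain ⟨l, c, hl, hu, hv⟩ := exists_tendsto_of_le_of_mem_closure huv h
  have hlim := ((hφ.tendsto c).comp hv).sub ((hφ.tendsto c).comp hu)
  rw [sub_self] at hlim
  exact tendsto_nhds_unique (tendsto_const_nhds.congr fun i => (hm i).symm) hlim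

end unitInterval

theorem exists_forall_increment_le {Γ Z X : Type*} [TopologicalSpace Z] [TopologicalSpace X]
    [CompactSpace X] [Nonempty X] [Preorder X] [OrderClosedTopology X]
    {ρ : Γ → Z → Z} {σ : Γ → X → X} (hmono : ∀ γ, Monotone (σ γ)) {D K : Set Z}
    (hK : IsCompact K) (hKD : K ⊆ D) (hD : D.Nonempty) (hcov : ∀ z ∈ D, ∃ γ, ρ γ z ∈ K)
    {f : Z → X → ℝ} (hf : ContinuousOn (fun p : Z × X => f p.1 p.2) (D ×ˢ univ))
    (hinv : ∀ γ, ∀ z ∈ D, ∀ x, f (ρ γ z) (σ γ x) = f z x) :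
    ∃ w ∈ D, ∃ a b : X, a ≤ b ∧ ∀ z ∈ D, ∀ x x', x ≤ x' → f w b - f w a ≤ f z x' - f z x := by
  have hKΔ : IsCompact (K ×ˢ {p : X × X | p.1 ≤ p.2}) :=
    hK.prod (isClosed_le continuous_fst continuous_snd).isCompact
  have hF : ContinuousOn (fun q : Z × X × X => f q.1 q.2.2 - f q.1 q.2.1)
      (K ×ˢ {p : X × X | p.1 ≤ p.2}) :=
    (hf.comp (continuous_fst.prodMk continuous_snd.snd).continuousOn
        fun q hq => ⟨hKD hq.1, trivial⟩).sub
      (hf.comp (continuous_fst.prodMk continuous_snd.fst).continuousOn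
        fun q hq => ⟨hKD hq.1, trivial⟩)
  obtain ⟨z, hz⟩ := hD
  obtain ⟨γ, hγ⟩ := hcov z hz
  obtain ⟨x⟩ := ‹Nonempty X›
  obtain ⟨⟨w, a, b⟩, ⟨hw, hab⟩, hmin⟩ := hKΔ.exists_isMinOn ⟨(ρ γ z, x, x), hγ, le_rfl⟩ hF
  refine ⟨w, hKD hw, a, b, hab, fun z hz x x' hxx' => ?_⟩
  obtain ⟨γ, hγ⟩ := hcov z hz
  rw [← hinv γ z hz x, ← hinv γ z hz x']
  exact hmin (show (ρ γ z, σ γ x, σ γ x') ∈ K ×ˢ {p : X × X | p.1 ≤ p.2} from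
    ⟨hγ, hmono γ hxx'⟩)

theorem monotone_of_invariant_leafwise_harmonic
    {Γ : Type*} [Group Γ] {ρ : Γ → ℂ → ℂ} (hΓ : IsCocompactFuchsian Γ ρ)
    {σ : Γ → unitInterval → unitInterval} (hσ : IsActionByHomeomorphisms Γ unitInterval σ)
    (hfix0 : ∀ γ : Γ, σ γ 0 = 0)
    (hnofinite : ∀ x : unitInterval, 0 < (x : ℝ) → (x : ℝ) < 1 →
      (Set.range fun γ : Γ => σ γ x).Infinite)
    {f : ℂ → unitInterval → ℝ}
    (hcont : ContinuousOn (fun p : ℂ × unitInterval => f p.1 p.2)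
      (unitDisc ×ˢ (univ : Set unitInterval)))
    (hharm : ∀ x : unitInterval, HarmonicOnSet (fun z => f z x) unitDisc)
    (hinv : ∀ γ : Γ, ∀ z ∈ unitDisc, ∀ x : unitInterval, f (ρ γ z) (σ γ x) = f z x)
    (hbd0 : ∀ z ∈ unitDisc, f z 0 = 0) (hbd1 : ∀ z ∈ unitDisc, f z 1 = 1) :
    ∀ z ∈ unitDisc, Monotone (f z) := by
  have hmono : ∀ γ, Monotone (σ γ) := fun γ => unitInterval.monotone_of_continuous_injective
    (hσ.continuous_act γ) (hσ.injective γ) (hfix0 γ)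
  obtain ⟨K, hKD, hK, hcov⟩ := hΓ.cocompact
  obtain ⟨w, hw, a, b, hab, hle⟩ :=
    exists_forall_increment_le hmono hK hKD ⟨0, mem_ball_self one_pos⟩ hcov hcont hinv
  have hconst := ((hharm b).sub (hharm a)).eqOn_of_isMinOn (convex_ball 0 1).isPreconnected hw
    fun z hz => hle z hz a b hab
  have horbit : ∀ γ, f w (σ γ b) - f w (σ γ a) = f w b - f w a := fun γ => by
    have hγw := hΓ.maps_disc γ⁻¹ w hw
    have h : f (ρ γ⁻¹ w) b - f (ρ γ⁻¹ w) a = f w b - f w a := hconst hγw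
    rwa [← hinv γ _ hγw, ← hinv γ _ hγw, hΓ.apply_inv_apply γ hw] at h
  have hm : 0 ≤ f w b - f w a := by
    by_cases h01 : a = 0 ∧ b = 1
    · simp [h01, hbd0 w hw, hbd1 w hw]
    refine (unitInterval.eq_zero_of_forall_sub_eq (fun γ => hmono γ hab) ?_
      (hcont.comp_continuous (continuous_const.prodMk continuous_id) fun x => ⟨hw, trivial⟩)
      horbit).ge
    exact (not_and_or.1 h01).imp (hσ.one_mem_closure_orbit hmono hnofinite)
      (hσ.zero_mem_closure_orbit hmono hnofinite)
  exact fun z hz x x' hxx' => by linarith [hle z hz x x' hxx']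

theorem equal_values_propagate_general
    {Γ : Type*} [Group Γ] (ρ : Γ → ℂ → ℂ) (hΓ : IsCocompactFuchsian Γ ρ)
    (σ : Γ → unitInterval → unitInterval) (hσ : IsActionByHomeomorphisms Γ unitInterval σ)
    (hfix0 : ∀ γ : Γ, σ γ 0 = 0)
    (hnofinite : ∀ x : unitInterval, 0 < (x : ℝ) → (x : ℝ) < 1 →
      (Set.range fun γ : Γ => σ γ x).Infinite)
    (f : ℂ → unitInterval → ℝ)
    (hcont : ContinuousOn (fun p : ℂ × unitInterval => f p.1 p.2)
      (unitDisc ×ˢ (univ : Set unitInterval)))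
    (hharm : ∀ x : unitInterval, HarmonicOnSet (fun z => f z x) unitDisc)
    (hinv : ∀ γ : Γ, ∀ z ∈ unitDisc, ∀ x : unitInterval, f (ρ γ z) (σ γ x) = f z x)
    (hbd0 : ∀ z ∈ unitDisc, f z 0 = 0) (hbd1 : ∀ z ∈ unitDisc, f z 1 = 1)
    (z₀ : ℂ) (hz₀ : z₀ ∈ unitDisc) (x₀ x₁ : unitInterval)
    (heq : f z₀ x₀ = f z₀ x₁) :
    ∀ z ∈ unitDisc, ∀ x : unitInterval, x₀ ≤ x → x ≤ x₁ → f z x = f z x₀ := by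
  have hmono := monotone_of_invariant_leafwise_harmonic hΓ hσ hfix0 hnofinite hcont hharm hinv
    hbd0 hbd1
  intro z hz x h₀ h₁
  have hzero := ((hharm x₁).sub (hharm x₀)).eqOn_of_isMinOn (convex_ball 0 1).isPreconnected hz₀
    (fun y hy => by simpa [heq] using hmono y hy (h₀.trans h₁)) hz
  simp only [heq, sub_self, sub_eq_zero] at hzero
  exact le_antisymm (hzero ▸ hmono z hz h₁) (hmono z hz h₀)

/-- **Key step of Proposition 7.2: equal values propagate.** With `Γ`, `σ`, `f` as in the
transverse monotonicity lemma, if `f(z₀,x₀) = f(z₀,x₁)` for some `z₀ ∈ 𝔻` and `x₀ < x₁`,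
then `f(z,x) = f(z,x₀)` for all `z ∈ 𝔻` and all `x ∈ [x₀,x₁]`. -/
theorem equal_values_propagate
    {Γ : Type*} [Group Γ] (ρ : Γ → ℂ → ℂ) (hΓ : IsCocompactFuchsian Γ ρ)
    (σ : Γ → unitInterval → unitInterval) (hσ : IsActionByHomeomorphisms Γ unitInterval σ)
    (hfix0 : ∀ γ : Γ, σ γ 0 = 0) (hfix1 : ∀ γ : Γ, σ γ 1 = 1)
    (hnofinite : ∀ x : unitInterval, 0 < (x : ℝ) → (x : ℝ) < 1 →
      (Set.range fun γ : Γ => σ γ x).Infinite)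
    (f : ℂ → unitInterval → ℝ)
    (hcont : ContinuousOn (fun p : ℂ × unitInterval => f p.1 p.2)
      (unitDisc ×ˢ (univ : Set unitInterval)))
    (hharm : ∀ x : unitInterval, HarmonicOnSet (fun z => f z x) unitDisc)
    (hinv : ∀ γ : Γ, ∀ z ∈ unitDisc, ∀ x : unitInterval, f (ρ γ z) (σ γ x) = f z x)
    (hbd0 : ∀ z ∈ unitDisc, f z 0 = 0) (hbd1 : ∀ z ∈ unitDisc, f z 1 = 1)
    (z₀ : ℂ) (hz₀ : z₀ ∈ unitDisc) (x₀ x₁ : unitInterval) (hx : x₀ < x₁)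
    (heq : f z₀ x₀ = f z₀ x₁) :
    ∀ z ∈ unitDisc, ∀ x : unitInterval, x₀ ≤ x → x ≤ x₁ → f z x = f z x₀ :=
  equal_values_propagate_general ρ hΓ σ hσ hfix0 hnofinite f hcont hharm hinv hbd0 hbd1 z₀ hz₀ x₀ x₁
    heq
end
end
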